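/- Let R be a commutative ring, A an associative unital R-algebra, and G an abelian group (written multiplicatively). There is a bijection between: (a) monoid homomorphisms act : G →* Module.End R A satisfying the Frobenius compatibility that for all g ∈ G and v, w ∈ A, act g (v * w) = (act g v) * w and act g (v * w) = v * (act g w); and (b) monoid homomorphisms φ : G →* A into the multiplicative monoid of A whose values all lie in the center of A. The bijection sends act to the map g ↦ act g 1, and conversely sends φ to the action by left multiplication act g = (v ↦ φ(g) * v). (This is the algebraic core of the theorem that K(G,2)-homotopical state sums are in bijective correspondence with pairs (A, φ) of a semi-simple algebra A and a homomorphism φ : G → Z(A)*.) -/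
import Mathlib


/-- Frobenius-compatible actions of `G` on `A` by `R`-linear endomorphisms are
in bijection with monoid homomorphisms `G →* A` with central values; the
bijection sends `act` to `g ↦ act g 1` and `φ` to left multiplication by `φ g`. -/
theorem frobenius_action_equiv_central_hom
    {R A G : Type*} [CommRing R] [Ring A] [Algebra R A] [CommGroup G] :
    ∃ e : {act : G →* Module.End R A //
            ∀ (g : G) (v w : A),
              act g (v * w) = act g v * w ∧ act g (v * w) = v * act g w} ≃
          {φ : G →* A // ∀ g : G, φ g ∈ Set.center A},
      (∀ act : {act : G →* Module.End R A //
            ∀ (g : G) (v w : A),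
              act g (v * w) = act g v * w ∧ act g (v * w) = v * act g w},
          ∀ g : G, (e act : G →* A) g = (act : G →* Module.End R A) g 1) ∧
      (∀ φ : {φ : G →* A // ∀ g : G, φ g ∈ Set.center A},
          ∀ (g : G) (v : A),
            (e.symm φ : G →* Module.End R A) g v = (φ : G →* A) g * v) := by
  classical
  -- forward map
  refine ⟨{
    toFun := fun act => ⟨{
      toFun := fun g => (act : G →* Module.End R A) g 1
      map_one' := by simp
      map_mul' := fun g h => by
        have h1 := (act.2 g 1 ((act : G →* Module.End R A) h 1)).1
        simpa using h1 },
      fun g => by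
        rw [Semigroup.mem_center_iff]
        intro w
        have h1 := (act.2 g 1 w).1
        have h2 := (act.2 g w 1).2
        simp only [one_mul, mul_one] at h1 h2
        simp only [MonoidHom.coe_mk, OneHom.coe_mk]
        rw [← h1, ← h2]⟩
    invFun := fun φ => ⟨{
      toFun := fun g => LinearMap.mulLeft R ((φ : G →* A) g)
      map_one' := by ext v; simp
      map_mul' := fun g h => by ext v; simp [mul_assoc] },
      fun g v w => by
        constructor
        · simp [mul_assoc]
        · simp only [MonoidHom.coe_mk, OneHom.coe_mk, LinearMap.mulLeft_apply]
          rw [← mul_assoc, (Set.mem_center_iff.mp (φ.2 g)).comm v, mul_assoc]⟩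
    left_inv := fun act => by
      ext g v
      simp only [MonoidHom.coe_mk, OneHom.coe_mk, LinearMap.mulLeft_apply]
      have h := (act.2 g 1 v).1
      simp only [one_mul] at h
      exact h.symm
    right_inv := fun φ => by
      ext g
      simp }, ?_, ?_⟩
  · intro act g; rfl
  · intro φ g v; rfl
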